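/- arXiv:math/0207007 — 2 statements merged into one kernel-verified Lean document; each statement's English description precedes it below -/
import Mathlib

section
/- Let A be a transitive finite ℤ₊-ring with Frobenius-Perron dimension d₊, and let R ∈ A ⊗ ℂ satisfy X·R = d₊(X)·R for all X, with R normalized to have positive coefficients. If d' : A → ℂ is a function with R·Y = d'(Y)·R for all Y ∈ A, then d' = d₊. -/
/-- Let `A` be a transitive finite `ℤ₊`-ring with basis `S` (a ring, free as a
`ℤ`-module with finite basis `S`, with nonnegative structure constants, which is
transitive). For `X ∈ S` let `d X` be the maximal nonnegative (real) eigenvalue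
of the matrix of left multiplication by `X`. Let `R` (with coordinate vector `r`) have strictly positive coefficients
and satisfy `X·R = d(X)·R` for all `X`. If `d' : S → ℂ` satisfies
`R·Y = d'(Y)·R` for all `Y ∈ A`, then `d' = d`. -/
theorem stmt5 {A : Type*} [Ring A] {S : Type*} [Fintype S] [DecidableEq S]
    (b : Module.Basis S ℤ A)
    (hpos : ∀ i j k : S, 0 ≤ b.repr (b i * b j) k)
    (htrans : ∀ X Z : S, (∃ Y : S, b.repr (b X * b Y) Z ≠ 0) ∧
      (∃ Y : S, b.repr (b Y * b X) Z ≠ 0))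
    (d : S → ℝ)
    (hd : ∀ X : S, 0 ≤ d X ∧
      ((d X : ℂ) ∈ spectrum ℂ (Matrix.of fun k j : S => ((b.repr (b X * b j) k : ℤ) : ℂ))) ∧
      (∀ t : ℝ, 0 ≤ t →
        ((t : ℂ) ∈ spectrum ℂ (Matrix.of fun k j : S => ((b.repr (b X * b j) k : ℤ) : ℂ))) →
        t ≤ d X))
    (r : S → ℝ) (hr : ∀ i, 0 < r i)
    (hreig : ∀ X k : S, ∑ j : S, ((b.repr (b X * b j) k : ℤ) : ℝ) * r j = d X * r k)
    (d' : S → ℂ)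
    (hd' : ∀ Y k : S, ∑ j : S, ((b.repr (b j * b Y) k : ℤ) : ℂ) * (r j : ℂ) = d' Y * (r k : ℂ)) :
    ∀ Y : S, d' Y = (d Y : ℂ) := by
  -- expansion lemmas
  have expandR : ∀ (x : A) (k m : S),
      b.repr (x * b k) m = ∑ l, b.repr x l * b.repr (b l * b k) m := by
    intro x k m
    conv_lhs => rw [← b.sum_repr x]
    rw [Finset.sum_mul, map_sum, Finsupp.coe_finset_sum, Finset.sum_apply]
    refine Finset.sum_congr rfl fun l _ => ?_
    rw [smul_mul_assoc, map_zsmul, Finsupp.smul_apply, smul_eq_mul]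
  have expandL : ∀ (x : A) (i m : S),
      b.repr (b i * x) m = ∑ l, b.repr x l * b.repr (b i * b l) m := by
    intro x i m
    conv_lhs => rw [← b.sum_repr x]
    rw [Finset.mul_sum, map_sum, Finsupp.coe_finset_sum, Finset.sum_apply]
    refine Finset.sum_congr rfl fun l _ => ?_
    rw [mul_smul_comm, map_zsmul, Finsupp.smul_apply, smul_eq_mul]
  -- associativity of structure constants
  have hassoc : ∀ i j k m : S,
      (∑ l, b.repr (b i * b j) l * b.repr (b l * b k) m)
        = ∑ l, b.repr (b j * b k) l * b.repr (b i * b l) m := by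
    intro i j k m
    rw [← expandR, ← expandL, mul_assoc]
  have swap3 : ∀ (f : S → S → S → ℂ),
      (∑ l : S, ∑ k : S, ∑ i : S, f i l k) = ∑ i : S, ∑ k : S, ∑ l : S, f i l k := by
    intro f
    have h1 : ∀ l : S, (∑ k : S, ∑ i : S, f i l k) = ∑ i : S, ∑ k : S, f i l k :=
      fun l => Finset.sum_comm
    simp_rw [h1]
    rw [Finset.sum_comm]
    exact Finset.sum_congr rfl fun i _ => Finset.sum_comm
  intro Y
  set cc : S → S → S → ℂ := fun i j k => ((b.repr (b i * b j) k : ℤ) : ℂ) with hcc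
  set rr : S → ℂ := fun i => ((r i : ℝ) : ℂ) with hrr
  have hassocC : ∀ i j k m : S,
      (∑ l, cc i j l * cc l k m) = ∑ l, cc j k l * cc i l m := by
    intro i j k m
    simp only [hcc]
    exact_mod_cast hassoc i j k m
  have hd'c : ∀ l : S, d' Y * rr l = ∑ j, cc j Y l * rr j := fun l => (hd' Y l).symm
  have hdc : ∀ l : S, (d Y : ℂ) * rr l = ∑ j, cc Y j l * rr j := by
    intro l
    have h := congrArg (Complex.ofReal) (hreig Y l)
    push_cast at h
    exact h.symm
  -- the positive quantity
  set Qr : ℝ := ∑ i, ∑ l, ((b.repr (b i * b l) Y : ℤ) : ℝ) * (r i * r l) with hQr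
  have hQpos : 0 < Qr := by
    obtain ⟨Y', hY'⟩ := (htrans Y Y).1
    have hterm : ∀ i ∈ Finset.univ, (0:ℝ) ≤ ∑ l, ((b.repr (b i * b l) Y : ℤ) : ℝ) * (r i * r l) := by
      intro i _
      refine Finset.sum_nonneg fun l _ => mul_nonneg ?_ (le_of_lt (mul_pos (hr i) (hr l)))
      exact_mod_cast hpos i l Y
    refine Finset.sum_pos' hterm ⟨Y, Finset.mem_univ Y, ?_⟩
    refine Finset.sum_pos' (fun l _ => mul_nonneg (by exact_mod_cast hpos Y l Y)
      (le_of_lt (mul_pos (hr Y) (hr l)))) ⟨Y', Finset.mem_univ Y', ?_⟩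
    refine mul_pos ?_ (mul_pos (hr Y) (hr Y'))
    have h0 : 0 < b.repr (b Y * b Y') Y := lt_of_le_of_ne (hpos Y Y' Y) (Ne.symm hY')
    exact_mod_cast h0
  have hQc : (Qr : ℂ) = ∑ i, ∑ l, cc i l Y * (rr i * rr l) := by
    rw [hQr]; push_cast; rfl
  have key : d' Y * (Qr : ℂ) = (d Y : ℂ) * (Qr : ℂ) := by
    rw [hQc]
    calc d' Y * (∑ i, ∑ l, cc i l Y * (rr i * rr l))
        = ∑ l, ∑ k, (d' Y * rr l) * (cc l k Y * rr k) := by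
          rw [Finset.mul_sum]
          refine Finset.sum_congr rfl fun l _ => ?_
          rw [Finset.mul_sum]
          exact Finset.sum_congr rfl fun k _ => by ring
      _ = ∑ l, ∑ k, ∑ i, cc i Y l * cc l k Y * (rr i * rr k) := by
          refine Finset.sum_congr rfl fun l _ => Finset.sum_congr rfl fun k _ => ?_
          rw [hd'c l, Finset.sum_mul]
          exact Finset.sum_congr rfl fun i _ => by ring
      _ = ∑ i, ∑ k, ∑ l, cc i Y l * cc l k Y * (rr i * rr k) :=
          swap3 (fun i l k => cc i Y l * cc l k Y * (rr i * rr k))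
      _ = ∑ i, ∑ k, (∑ l, cc i Y l * cc l k Y) * (rr i * rr k) := by
          refine Finset.sum_congr rfl fun i _ => Finset.sum_congr rfl fun k _ => ?_
          rw [Finset.sum_mul]
      _ = ∑ i, ∑ k, (∑ l, cc Y k l * cc i l Y) * (rr i * rr k) := by
          refine Finset.sum_congr rfl fun i _ => Finset.sum_congr rfl fun k _ => ?_
          rw [hassocC i Y k Y]
      _ = ∑ i, ∑ k, ∑ l, cc Y k l * cc i l Y * (rr i * rr k) := by
          refine Finset.sum_congr rfl fun i _ => Finset.sum_congr rfl fun k _ => ?_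
          rw [Finset.sum_mul]
      _ = ∑ i, ∑ l, ∑ k, cc Y k l * cc i l Y * (rr i * rr k) :=
          Finset.sum_congr rfl fun i _ => Finset.sum_comm
      _ = ∑ i, ∑ l, cc i l Y * rr i * ((d Y : ℂ) * rr l) := by
          refine Finset.sum_congr rfl fun i _ => Finset.sum_congr rfl fun l _ => ?_
          rw [hdc l, Finset.mul_sum]
          exact Finset.sum_congr rfl fun k _ => by ring
      _ = (d Y : ℂ) * (∑ i, ∑ l, cc i l Y * (rr i * rr l)) := by
          rw [Finset.mul_sum]
          refine Finset.sum_congr rfl fun i _ => ?_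
          rw [Finset.mul_sum]
          exact Finset.sum_congr rfl fun l _ => by ring
  have hQne : (Qr : ℂ) ≠ 0 := by exact_mod_cast ne_of_gt hQpos
  exact mul_right_cancel₀ hQne key
end

section
/- In a finite abelian category with determinant defined via a dimension function d, if 0 → X → Y → Z → 0 is an exact sequence respected by an automorphism a of Y (inducing automorphisms on X and Z), then det(a|_Y) = det(a|_X)·det(a|_Z) in 𝔸 ⊗_ℤ ℂ*. -/
/-!
The range of `f` is an `aW`-stable subspace of `W` on which `aW` is conjugate, through `f`, to
`aV`, and `g` identifies the quotient by it with `U`, `aW` inducing `aU`. In a basis adapted to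
the subspace the matrix of `aW` is block upper triangular, so `det aW = det aV * det aU`
for every simple object, which becomes additive in `𝔸 ⊗_ℤ ℂ*`.
-/

open scoped TensorProduct

noncomputable abbrev AlgInt : Type := integralClosure ℤ ℂ

theorem LinearMap.det_eq_of_semiconj {R M N : Type*} [CommRing R] [AddCommGroup M] [Module R M]
    [AddCommGroup N] [Module R N] (e : M ≃ₗ[R] N) {φ : M →ₗ[R] M} {ψ : N →ₗ[R] N}
    (h : e.toLinearMap ∘ₗ φ = ψ ∘ₗ e.toLinearMap) : φ.det = ψ.det := by
  rw [← LinearMap.det_conj φ e, ← LinearMap.comp_assoc, h, LinearMap.comp_assoc,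
    ← LinearEquiv.coe_trans, e.symm_trans_self, LinearEquiv.refl_toLinearMap, LinearMap.comp_id]

section Exact

variable {K V W U : Type*} [Field K]
  [AddCommGroup V] [Module K V] [AddCommGroup W] [Module K W] [FiniteDimensional K W]
  [AddCommGroup U] [Module K U] {f : V →ₗ[K] W} {g : W →ₗ[K] U}

theorem LinearMap.det_eq_det_mul_det_of_exact {aV : V →ₗ[K] V} {aW : W →ₗ[K] W}
    {aU : U →ₗ[K] U} (hf : Function.Injective f) (hg : Function.Surjective g)
    (hfg : Function.Exact f g) (hf_comm : aW ∘ₗ f = f ∘ₗ aV) (hg_comm : aU ∘ₗ g = g ∘ₗ aW) :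
    aW.det = aV.det * aU.det := by
  have hinv : range f ≤ (range f).comap aW := by
    rintro _ ⟨v, rfl⟩
    exact ⟨aV v, (LinearMap.congr_fun hf_comm v).symm⟩
  have hsub : (aW.restrict hinv).det = aV.det := by
    refine (LinearMap.det_eq_of_semiconj (LinearEquiv.ofInjective f hf) ?_).symm
    ext v
    simpa using (LinearMap.congr_fun hf_comm v).symm
  have hquot : ((range f).mapQ (range f) aW hinv).det = aU.det := by
    refine LinearMap.det_eq_of_semiconj (hfg.linearEquivOfSurjective hg) ?_
    ext w
    exact (LinearMap.congr_fun hg_comm w).symm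
  rw [LinearMap.det_eq_det_mul_det (range f) aW hinv, hsub, hquot]

theorem LinearEquiv.det_eq_det_mul_det_of_exact {aV : V ≃ₗ[K] V} {aW : W ≃ₗ[K] W}
    {aU : U ≃ₗ[K] U} (hf : Function.Injective f) (hg : Function.Surjective g)
    (hfg : Function.Exact f g) (hf_comm : aW.toLinearMap ∘ₗ f = f ∘ₗ aV.toLinearMap)
    (hg_comm : aU.toLinearMap ∘ₗ g = g ∘ₗ aW.toLinearMap) :
    LinearEquiv.det aW = LinearEquiv.det aV * LinearEquiv.det aU :=
  Units.ext <| by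
    simpa using LinearMap.det_eq_det_mul_det_of_exact hf hg hfg hf_comm hg_comm

end Exact

/-- `V Z`, `W Z`, `U Z` stand for `Hom(P(Z), X)`, `Hom(P(Z), Y)`, `Hom(P(Z), Z')`: since
`Hom(P(Z), -)` is exact, the exact sequence and the automorphism `a` give these data for every
simple `Z`. -/
theorem stmt7_general {S : Type*} [Fintype S] (d : S → AlgInt)
    (V W U : S → Type*)
    [∀ Z, AddCommGroup (V Z)] [∀ Z, Module ℂ (V Z)]
    [∀ Z, AddCommGroup (W Z)] [∀ Z, Module ℂ (W Z)] [∀ Z, FiniteDimensional ℂ (W Z)]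
    [∀ Z, AddCommGroup (U Z)] [∀ Z, Module ℂ (U Z)]
    (f : ∀ Z, V Z →ₗ[ℂ] W Z) (g : ∀ Z, W Z →ₗ[ℂ] U Z)
    (hf : ∀ Z, Function.Injective (f Z)) (hg : ∀ Z, Function.Surjective (g Z))
    (hexact : ∀ Z, LinearMap.range (f Z) = LinearMap.ker (g Z))
    (aV : ∀ Z, V Z ≃ₗ[ℂ] V Z) (aW : ∀ Z, W Z ≃ₗ[ℂ] W Z) (aU : ∀ Z, U Z ≃ₗ[ℂ] U Z)
    (hcomm1 : ∀ Z, (aW Z).toLinearMap ∘ₗ f Z = f Z ∘ₗ (aV Z).toLinearMap)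
    (hcomm2 : ∀ Z, (aU Z).toLinearMap ∘ₗ g Z = g Z ∘ₗ (aW Z).toLinearMap) :
    (∑ Z : S, d Z ⊗ₜ[ℤ] Additive.ofMul (LinearEquiv.det (aW Z)) :
        AlgInt ⊗[ℤ] Additive ℂˣ) =
      (∑ Z : S, d Z ⊗ₜ[ℤ] Additive.ofMul (LinearEquiv.det (aV Z))) +
      (∑ Z : S, d Z ⊗ₜ[ℤ] Additive.ofMul (LinearEquiv.det (aU Z))) := by
  rw [← Finset.sum_add_distrib]
  refine Finset.sum_congr rfl fun Z _ => ?_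
  have hfg : Function.Exact (f Z) (g Z) := LinearMap.exact_iff.mpr (hexact Z).symm
  rw [LinearEquiv.det_eq_det_mul_det_of_exact (hf Z) (hg Z) hfg (hcomm1 Z) (hcomm2 Z),
    ofMul_mul, TensorProduct.tmul_add]

/-- Multiplicativity of the categorical determinant on exact sequences.
For each simple `Z ∈ S`, applying the exact functor `Hom(P(Z), -)` to a short
exact sequence `0 → X → Y → Z' → 0` respected by an automorphism `a` of `Y`
yields a short exact sequence of finite dimensional vector spaces
`0 → V Z → W Z → U Z → 0` with compatible automorphisms `aV, aW, aU`.
Then `det(a|_Y) = det(a|_X) · det(a|_Z')` in `𝔸 ⊗_ℤ ℂ*` (written additively),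
where `det(a) = ∏_Z det(a on Hom(P(Z),·))^{d Z}` for the dimension function
`d` with algebraic-integer values. -/
theorem stmt7 {S : Type*} [Fintype S] (d : S → AlgInt)
    (V W U : S → Type*)
    [∀ Z, AddCommGroup (V Z)] [∀ Z, Module ℂ (V Z)] [∀ Z, FiniteDimensional ℂ (V Z)]
    [∀ Z, AddCommGroup (W Z)] [∀ Z, Module ℂ (W Z)] [∀ Z, FiniteDimensional ℂ (W Z)]
    [∀ Z, AddCommGroup (U Z)] [∀ Z, Module ℂ (U Z)] [∀ Z, FiniteDimensional ℂ (U Z)]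
    (f : ∀ Z, V Z →ₗ[ℂ] W Z) (g : ∀ Z, W Z →ₗ[ℂ] U Z)
    (hf : ∀ Z, Function.Injective (f Z)) (hg : ∀ Z, Function.Surjective (g Z))
    (hexact : ∀ Z, LinearMap.range (f Z) = LinearMap.ker (g Z))
    (aV : ∀ Z, V Z ≃ₗ[ℂ] V Z) (aW : ∀ Z, W Z ≃ₗ[ℂ] W Z) (aU : ∀ Z, U Z ≃ₗ[ℂ] U Z)
    (hcomm1 : ∀ Z, (aW Z).toLinearMap ∘ₗ f Z = f Z ∘ₗ (aV Z).toLinearMap)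
    (hcomm2 : ∀ Z, (aU Z).toLinearMap ∘ₗ g Z = g Z ∘ₗ (aW Z).toLinearMap) :
    (∑ Z : S, d Z ⊗ₜ[ℤ] Additive.ofMul (LinearEquiv.det (aW Z)) :
        AlgInt ⊗[ℤ] Additive ℂˣ) =
      (∑ Z : S, d Z ⊗ₜ[ℤ] Additive.ofMul (LinearEquiv.det (aV Z))) +
      (∑ Z : S, d Z ⊗ₜ[ℤ] Additive.ofMul (LinearEquiv.det (aU Z))) :=
  stmt7_general d V W U f g hf hg hexact aV aW aU hcomm1 hcomm2
end
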